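/- arXiv:2205.05850 — 2 statements merged into one kernel-verified Lean document; each statement's English description precedes it below -/
import Mathlib

section
/- If F_U is 2π/2^{b1}-symmetric, then the outputs Y1 and Y2 are independent: p(y1,y2; F_U) = (1/2^{b1}) · p(y2; F_U) for all y1, y2. -/
/-! Rotating `u` by one step `2π/2^{b1}` shifts the label `y1` by one, and `F` does not see the
rotation, so `y1 ↦ ∫ W_{y1,y2} dF` is invariant under `y1 ↦ y1 + 1`. A function on the cyclic
group `ZMod (2^{b1})` with this property is constant, hence equal to its average. -/

open MeasureTheory Real ENNReal

noncomputable def rot (φ : ℝ) : ℂ → ℂ := fun u => u * Complex.exp (φ * Complex.I)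

theorem ZMod.apply_eq_of_forall_apply_add_one {n : ℕ} {α : Type*} {f : ZMod n → α}
    (h : ∀ z, f (z + 1) = f z) (a b : ZMod n) : f a = f b := by
  have hcast : ∀ k : ℤ, f k = f 0 := by
    intro k
    induction k using Int.induction_on with
    | zero => simp
    | succ k ih => rw [Int.cast_add, Int.cast_one, h, ih]
    | pred k ih =>
      rw [← ih, ← h]
      push_cast
      ring_nf
  obtain ⟨a, rfl⟩ := ZMod.intCast_surjective a
  obtain ⟨b, rfl⟩ := ZMod.intCast_surjective b
  rw [hcast, hcast]

theorem ZMod.apply_eq_average_of_forall_apply_add_one {n : ℕ} [NeZero n] {K : Type*} [Field K]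
    [CharZero K] {f : ZMod n → K} (h : ∀ z, f (z + 1) = f z) (a : ZMod n) :
    f a = 1 / n * ∑ z, f z := by
  have hn : (n : K) ≠ 0 := Nat.cast_ne_zero.mpr (NeZero.ne n)
  simp only [fun z => ZMod.apply_eq_of_forall_apply_add_one h z a, Finset.sum_const,
    Finset.card_univ, ZMod.card, nsmul_eq_mul]
  field_simp

theorem measurableEmbedding_rot (φ : ℝ) : MeasurableEmbedding (rot φ) :=
  measurableEmbedding_mulRight₀ (Complex.exp_ne_zero _)

theorem integral_comp_rot_of_map_eq {φ : ℝ} {F : Measure ℂ} (hF : Measure.map (rot φ) F = F)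
    (g : ℂ → ℝ) : ∫ u, g (rot φ u) ∂F = ∫ u, g u ∂F :=
  MeasurePreserving.integral_comp ⟨(measurableEmbedding_rot φ).measurable, hF⟩
    (measurableEmbedding_rot φ) g

theorem outputs_independent_general (b1 b2 : ℕ)
    (W : ℂ → ZMod (2 ^ b1) → Fin (2 ^ b2) → ℝ)
    (hWshift : ∀ (u : ℂ) (k : ℤ) (y1 : ZMod (2 ^ b1)) (y2 : Fin (2 ^ b2)),
      W (rot (2 * π * k / 2 ^ b1) u) y1 y2 = W u (y1 - (k : ZMod (2 ^ b1))) y2)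
    (F : Measure ℂ)
    (hFsym : Measure.map (rot (2 * π / 2 ^ b1)) F = F) :
    ∀ (y1 : ZMod (2 ^ b1)) (y2 : Fin (2 ^ b2)),
      (∫ u, W u y1 y2 ∂F)
        = (1 / 2 ^ b1) * ∑ y1' : ZMod (2 ^ b1), ∫ u, W u y1' y2 ∂F := by
  intro y1 y2
  have hstep : ∀ z : ZMod (2 ^ b1), ∫ u, W u (z + 1) y2 ∂F = ∫ u, W u z y2 ∂F := by
    intro z
    have hshift : ∀ u, W (rot (2 * π / 2 ^ b1) u) (z + 1) y2 = W u z y2 := by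
      simpa using (hWshift · 1 (z + 1) y2)
    rw [← integral_comp_rot_of_map_eq hFsym]
    simp only [hshift]
  simpa using
    ZMod.apply_eq_average_of_forall_apply_add_one (f := fun z => ∫ u, W u z y2 ∂F) hstep y1

/-- if `F` is `2π/2^{b1}`-symmetric, the outputs `Y1` and `Y2` are
independent: `p(y1,y2;F) = (1/2^{b1}) · p(y2;F)`, where
`p(y2;F) = Σ_{y1} ∫ W_{y1,y2}(u) dF(u)`. -/
theorem outputs_independent (b1 b2 : ℕ) (hb1 : 0 < b1) (hb2 : 0 < b2)
    (W : ℂ → ZMod (2 ^ b1) → Fin (2 ^ b2) → ℝ)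
    (hWmeas : ∀ y1 y2, Measurable (fun u => W u y1 y2))
    (hWnn : ∀ u y1 y2, 0 ≤ W u y1 y2)
    (hWsum : ∀ u, (∑ y1 : ZMod (2 ^ b1), ∑ y2 : Fin (2 ^ b2), W u y1 y2) = 1)
    (hWshift : ∀ (u : ℂ) (k : ℤ) (y1 : ZMod (2 ^ b1)) (y2 : Fin (2 ^ b2)),
      W (rot (2 * π * k / 2 ^ b1) u) y1 y2 = W u (y1 - (k : ZMod (2 ^ b1))) y2)
    (F : Measure ℂ) [IsProbabilityMeasure F]
    (hFsym : Measure.map (rot (2 * π / 2 ^ b1)) F = F)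
    (hWint : ∀ y1 y2, Integrable (fun u => W u y1 y2) F) :
    ∀ (y1 : ZMod (2 ^ b1)) (y2 : Fin (2 ^ b2)),
      (∫ u, W u y1 y2 ∂F)
        = (1 / 2 ^ b1) * ∑ y1' : ZMod (2 ^ b1), ∫ u, W u y1' y2 ∂F :=
  outputs_independent_general b1 b2 W hWshift F hFsym
end

section
/- The weak (Gateaux) derivative of the mutual information at F⁰ in the direction F equals ∫ d(u;F⁰) dF(u) − ∫ d(u;F⁰) dF⁰(u), where d(u;F) = Σ_y W_y(u) log(W_y(u)/p(y;F)) is the divergence function; i.e., lim_{λ→0⁺} [I((1−λ)F⁰+λF) − I(F⁰)]/λ equals that expression, provided all output probabilities p(y;F⁰) are strictly positive. -/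
open MeasureTheory Real ENNReal Filter

/-- The output PMF `p(y;F) = ∫ W_y(u) dF(u)`. -/
noncomputable def outP {Y : Type*} (W : ℂ → Y → ℝ) (F : Measure ℂ) (y : Y) : ℝ :=
  ∫ u, W u y ∂F

/-- The divergence function `d(u;F) = Σ_y W_y(u) log(W_y(u)/p(y;F))`
(with the convention `0 log 0 = 0`, automatic since `Real.log 0 = 0`). -/
noncomputable def dvg {Y : Type*} [Fintype Y] (W : ℂ → Y → ℝ) (F : Measure ℂ) (u : ℂ) : ℝ :=
  ∑ y, W u y * Real.log (W u y / outP W F y)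

/-- Mutual information `I(F) = Σ_y ∫ W_y(u) log(W_y(u)/p(y;F)) dF(u)`. -/
noncomputable def relMI {Y : Type*} [Fintype Y] (W : ℂ → Y → ℝ) (F : Measure ℂ) : ℝ :=
  ∑ y, ∫ u, W u y * Real.log (W u y / outP W F y) ∂F

/-!
Splitting `w log (w/p) = w log w - w log p` gives `I(F) = N(F) - Σ_y p(y;F) log p(y;F)` with
`N(F) = Σ_y ∫ W_y log W_y dF = -H(Y|X)`. Since `0 ≤ W_y ≤ 1`, all integrands are bounded, so
`N` and `p(y; ·)` are affine along `F_λ = (1-λ)F⁰ + λF`. Hence `I(F_λ)` is an affine function of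
`λ` minus `Σ_y q_y log q_y` with `q_y(λ) = (1-λ)p(y;F⁰) + λp(y;F)`, which is differentiable at
`λ = 0` because `q_y(0) > 0`. Its derivative
`N(F) - N(F⁰) - Σ_y (p(y;F) - p(y;F⁰))(log p(y;F⁰) + 1)` equals
`∫ d(·;F⁰) dF - ∫ d(·;F⁰) dF⁰`: the `+1` terms cancel as both output PMFs sum to one.
-/

lemma abs_mul_log_le_one {x : ℝ} (h0 : 0 ≤ x) (h1 : x ≤ 1) : |x * Real.log x| ≤ 1 :=
  abs_le.mpr
    ⟨by linarith [self_sub_one_le_mul_log h0], (mul_log_nonpos h0 h1).trans zero_le_one⟩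

lemma mul_log_div_eq_sub {w p : ℝ} (hp : 0 < p) :
    w * Real.log (w / p) = w * Real.log w - w * Real.log p := by
  rcases eq_or_ne w 0 with rfl | hw
  · simp
  · rw [log_div hw hp.ne', mul_sub]

lemma hasDerivAt_lineMap (a b x : ℝ) : HasDerivAt (fun t => (1 - t) * a + t * b) (b - a) x :=
  ((((hasDerivAt_id' x).const_sub 1).mul_const a).add
    ((hasDerivAt_id' x).mul_const b)).congr_deriv (by ring)

lemma hasDerivAt_lineMap_mul_log {a : ℝ} (b : ℝ) (ha : a ≠ 0) :
    HasDerivAt (fun t => ((1 - t) * a + t * b) * Real.log ((1 - t) * a + t * b))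
      ((b - a) * (Real.log a + 1)) 0 := by
  have hlog : HasDerivAt (fun x => x * Real.log x) (Real.log a + 1) ((1 - 0) * a + 0 * b) := by
    simpa using hasDerivAt_mul_log ha
  exact (hlog.comp 0 (hasDerivAt_lineMap a b 0)).congr_deriv (mul_comm _ _)

section Mixture

variable {α : Type*} [MeasurableSpace α] {μ ν : Measure α} {t : ℝ}

lemma isProbabilityMeasure_mixture [IsProbabilityMeasure μ] [IsProbabilityMeasure ν]
    (ht0 : 0 ≤ t) (ht1 : t ≤ 1) :
    IsProbabilityMeasure (ENNReal.ofReal (1 - t) • μ + ENNReal.ofReal t • ν) := by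
  constructor
  simp only [Measure.add_apply, Measure.smul_apply, measure_univ, smul_eq_mul, mul_one]
  rw [← ofReal_add (by linarith) ht0]
  simp

lemma integral_mixture {f : α → ℝ} (ht0 : 0 ≤ t) (ht1 : t ≤ 1) (hμ : Integrable f μ)
    (hν : Integrable f ν) :
    ∫ x, f x ∂(ENNReal.ofReal (1 - t) • μ + ENNReal.ofReal t • ν)
      = (1 - t) * ∫ x, f x ∂μ + t * ∫ x, f x ∂ν := by
  rw [integral_add_measure (hμ.smul_measure ofReal_ne_top) (hν.smul_measure ofReal_ne_top),
    integral_smul_measure, integral_smul_measure, toReal_ofReal (sub_nonneg.mpr ht1),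
    toReal_ofReal ht0, smul_eq_mul, smul_eq_mul]

end Mixture

noncomputable def negCondEntropy {Y : Type*} [Fintype Y] (W : ℂ → Y → ℝ) (μ : Measure ℂ) :
    ℝ :=
  ∑ y, ∫ u, W u y * Real.log (W u y) ∂μ

structure IsChannel {α Y : Type*} [MeasurableSpace α] [Fintype Y] (W : α → Y → ℝ) :
    Prop where
  measurable : ∀ y, Measurable fun u => W u y
  nonneg : ∀ u y, 0 ≤ W u y
  sum_eq_one : ∀ u, ∑ y, W u y = 1

namespace IsChannel

section General

variable {α Y : Type*} [MeasurableSpace α] [Fintype Y] {W : α → Y → ℝ}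

lemma le_one (hW : IsChannel W) (u : α) (y : Y) : W u y ≤ 1 :=
  hW.sum_eq_one u ▸ Finset.single_le_sum (fun i _ => hW.nonneg u i) (Finset.mem_univ y)

variable (μ : Measure α) [IsFiniteMeasure μ]

lemma integrable (hW : IsChannel W) (y : Y) : Integrable (fun u => W u y) μ :=
  .of_bound (hW.measurable y).aestronglyMeasurable 1 <| ae_of_all _ fun u => by
    rw [norm_of_nonneg (hW.nonneg u y)]
    exact hW.le_one u y

lemma integrable_mul_log (hW : IsChannel W) (y : Y) :
    Integrable (fun u => W u y * Real.log (W u y)) μ :=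
  .of_bound ((hW.measurable y).mul (measurable_log.comp (hW.measurable y))).aestronglyMeasurable
    1 <| ae_of_all _ fun u => abs_mul_log_le_one (hW.nonneg u y) (hW.le_one u y)

end General

variable {Y : Type*} [Fintype Y] {W : ℂ → Y → ℝ}

section FiniteMeasure

variable {μ : Measure ℂ} [IsFiniteMeasure μ] {p : ℝ}

lemma integrable_mul_log_div (hW : IsChannel W) (hp : 0 < p) (y : Y) :
    Integrable (fun u => W u y * Real.log (W u y / p)) μ := by
  simp_rw [mul_log_div_eq_sub hp]
  exact (hW.integrable_mul_log μ y).sub ((hW.integrable μ y).mul_const _)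

lemma integral_mul_log_div (hW : IsChannel W) (hp : 0 < p) (y : Y) :
    ∫ u, W u y * Real.log (W u y / p) ∂μ
      = ∫ u, W u y * Real.log (W u y) ∂μ - outP W μ y * Real.log p := by
  simp_rw [mul_log_div_eq_sub hp]
  rw [integral_sub (hW.integrable_mul_log μ y) ((hW.integrable μ y).mul_const _),
    integral_mul_const, outP]

lemma relMI_eq (hW : IsChannel W) (hpos : ∀ y, 0 < outP W μ y) :
    relMI W μ = negCondEntropy W μ - ∑ y, outP W μ y * Real.log (outP W μ y) := by
  rw [relMI, negCondEntropy, ← Finset.sum_sub_distrib]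
  exact Finset.sum_congr rfl fun y _ => hW.integral_mul_log_div (hpos y) y

lemma integral_dvg (hW : IsChannel W) {ν : Measure ℂ} (hpos : ∀ y, 0 < outP W ν y) :
    ∫ u, dvg W ν u ∂μ = negCondEntropy W μ - ∑ y, outP W μ y * Real.log (outP W ν y) := by
  unfold dvg
  rw [integral_finsetSum _ fun y _ => hW.integrable_mul_log_div (hpos y) y,
    negCondEntropy, ← Finset.sum_sub_distrib]
  exact Finset.sum_congr rfl fun y _ => hW.integral_mul_log_div (hpos y) y

end FiniteMeasure

lemma sum_outP_eq_one (hW : IsChannel W) (μ : Measure ℂ) [IsProbabilityMeasure μ] :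
    ∑ y, outP W μ y = 1 := by
  simp only [outP]
  rw [← integral_finsetSum _ fun y _ => hW.integrable μ y]
  simp [hW.sum_eq_one]

lemma integral_dvg_sub_integral_dvg (hW : IsChannel W) (F0 F : Measure ℂ)
    [IsProbabilityMeasure F0] [IsProbabilityMeasure F] (hpos : ∀ y, 0 < outP W F0 y) :
    ∫ u, dvg W F0 u ∂F - ∫ u, dvg W F0 u ∂F0 = negCondEntropy W F - negCondEntropy W F0
      - ∑ y, (outP W F y - outP W F0 y) * (Real.log (outP W F0 y) + 1) := by
  have hsplit : ∑ y, (outP W F y - outP W F0 y) * (Real.log (outP W F0 y) + 1)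
      = (∑ y, outP W F y * Real.log (outP W F0 y) - ∑ y, outP W F0 y * Real.log (outP W F0 y))
        + (∑ y, outP W F y - ∑ y, outP W F0 y) := by
    simp only [← Finset.sum_sub_distrib, ← Finset.sum_add_distrib]
    exact Finset.sum_congr rfl fun y _ => by ring
  rw [hW.integral_dvg hpos, hW.integral_dvg hpos, hsplit, hW.sum_outP_eq_one,
    hW.sum_outP_eq_one]
  ring

section Mixture

variable {F0 F : Measure ℂ} [IsProbabilityMeasure F0] [IsProbabilityMeasure F] {t : ℝ}

lemma outP_mixture (hW : IsChannel W) (ht0 : 0 ≤ t) (ht1 : t ≤ 1) (y : Y) :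
    outP W (ENNReal.ofReal (1 - t) • F0 + ENNReal.ofReal t • F) y
      = (1 - t) * outP W F0 y + t * outP W F y :=
  integral_mixture ht0 ht1 (hW.integrable F0 y) (hW.integrable F y)

lemma negCondEntropy_mixture (hW : IsChannel W) (ht0 : 0 ≤ t) (ht1 : t ≤ 1) :
    negCondEntropy W (ENNReal.ofReal (1 - t) • F0 + ENNReal.ofReal t • F)
      = (1 - t) * negCondEntropy W F0 + t * negCondEntropy W F := by
  simp only [negCondEntropy, Finset.mul_sum, ← Finset.sum_add_distrib]
  exact Finset.sum_congr rfl fun y _ =>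
    integral_mixture ht0 ht1 (hW.integrable_mul_log F0 y) (hW.integrable_mul_log F y)

lemma relMI_mixture (hW : IsChannel W) (hpos : ∀ y, 0 < outP W F0 y) (ht0 : 0 ≤ t)
    (ht1 : t < 1) :
    relMI W (ENNReal.ofReal (1 - t) • F0 + ENNReal.ofReal t • F)
      = (1 - t) * negCondEntropy W F0 + t * negCondEntropy W F
        - ∑ y, ((1 - t) * outP W F0 y + t * outP W F y)
          * Real.log ((1 - t) * outP W F0 y + t * outP W F y) := by
  have := isProbabilityMeasure_mixture (μ := F0) (ν := F) ht0 ht1.le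
  have hpos_mix : ∀ y, 0 < outP W (ENNReal.ofReal (1 - t) • F0 + ENNReal.ofReal t • F) y :=
    fun y => by
      rw [hW.outP_mixture ht0 ht1.le]
      exact add_pos_of_pos_of_nonneg (mul_pos (sub_pos.mpr ht1) (hpos y))
        (mul_nonneg ht0 (integral_nonneg fun u => hW.nonneg u y))
  simp only [hW.relMI_eq hpos_mix, hW.negCondEntropy_mixture ht0 ht1.le,
    hW.outP_mixture ht0 ht1.le]

end Mixture

end IsChannel

theorem weak_derivative_MI_general {Y : Type*} [Fintype Y] (W : ℂ → Y → ℝ)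
    (hWmeas : ∀ y, Measurable (fun u => W u y))
    (hWnn : ∀ u y, 0 ≤ W u y) (hWsum : ∀ u, ∑ y, W u y = 1)
    (F0 F : Measure ℂ) [IsProbabilityMeasure F0] [IsProbabilityMeasure F]
    (hpos : ∀ y, 0 < outP W F0 y) :
    Tendsto
      (fun l : ℝ =>
        (relMI W (ENNReal.ofReal (1 - l) • F0 + ENNReal.ofReal l • F) - relMI W F0) / l)
      (nhdsWithin 0 (Set.Ioi 0))
      (nhds ((∫ u, dvg W F0 u ∂F) - ∫ u, dvg W F0 u ∂F0)) := by
  have hW : IsChannel W := ⟨hWmeas, hWnn, hWsum⟩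
  set G : ℝ → ℝ := fun t => (1 - t) * negCondEntropy W F0 + t * negCondEntropy W F
    - ∑ y, ((1 - t) * outP W F0 y + t * outP W F y)
      * Real.log ((1 - t) * outP W F0 y + t * outP W F y)
  have hG_deriv : HasDerivAt G (negCondEntropy W F - negCondEntropy W F0
      - ∑ y, (outP W F y - outP W F0 y) * (Real.log (outP W F0 y) + 1)) 0 :=
    (hasDerivAt_lineMap _ _ 0).sub
      (HasDerivAt.fun_sum fun y _ => hasDerivAt_lineMap_mul_log _ (hpos y).ne')
  have hG_zero : G 0 = relMI W F0 := by simp [G, hW.relMI_eq hpos]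
  rw [hW.integral_dvg_sub_integral_dvg F0 F hpos]
  refine hG_deriv.tendsto_slope_zero_right.congr' ?_
  filter_upwards [Ioo_mem_nhdsGT_of_mem ⟨le_refl 0, zero_lt_one⟩] with t ht
  rw [zero_add, hG_zero, hW.relMI_mixture hpos ht.1.le ht.2, smul_eq_mul, div_eq_inv_mul]

/-- the weak (Gateaux) derivative of mutual information at `F⁰` in
direction `F` is `∫ d(u;F⁰) dF − ∫ d(u;F⁰) dF⁰`, provided `p(y;F⁰) > 0` for all `y`. -/
theorem weak_derivative_MI {Y : Type*} [Fintype Y] (W : ℂ → Y → ℝ)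
    (hWmeas : ∀ y, Measurable (fun u => W u y))
    (hWnn : ∀ u y, 0 ≤ W u y) (hWsum : ∀ u, ∑ y, W u y = 1)
    (F0 F : Measure ℂ) [IsProbabilityMeasure F0] [IsProbabilityMeasure F]
    (hpos : ∀ y, 0 < outP W F0 y)
    (hWint0 : ∀ y, Integrable (fun u => W u y) F0)
    (hWint : ∀ y, Integrable (fun u => W u y) F)
    (hhint0 : Integrable (fun u => -∑ y, W u y * Real.log (W u y)) F0)
    (hhint : Integrable (fun u => -∑ y, W u y * Real.log (W u y)) F) :
    Tendsto
      (fun l : ℝ =>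
        (relMI W (ENNReal.ofReal (1 - l) • F0 + ENNReal.ofReal l • F) - relMI W F0) / l)
      (nhdsWithin 0 (Set.Ioi 0))
      (nhds ((∫ u, dvg W F0 u ∂F) - ∫ u, dvg W F0 u ∂F0)) :=
  weak_derivative_MI_general W hWmeas hWnn hWsum F0 F hpos
end
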